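/- arXiv:1712.00135 — 2 statements merged into one kernel-verified Lean document; each statement's English description precedes it below -/
import Mathlib

section
/- (Wave equation for Φ0.) In the linearized setting, let α, 𝔣 ∈ I and assume α satisfies the Teukolsky equation exactly in B: □α = −4ω̄·e4(α) + (2κ + 4ω)·e3(α) + ((1/2)κκ̄ + 2ωκ̄ − 4ρ + 4ρF² − 4e4(ω̄) − 10κω̄ − 8ωω̄ + 4Z²)·α + ρF·(2e4(𝔣) + (2κ + 4ω)·𝔣). Define Φ0 := r²κ̄²·α, Φ1 := P̄(Φ0), Φ3 := r²κ̄·𝔣. Then, exactly in B: □Φ0 = (1/r)·(2κκ̄ − 4ρ)·Φ1 + (−(1/2)κκ̄ − 4ρ + 4ρF² + 4Z²)·Φ0 + ρF·((2/r)·Q(Φ3) − 4ρ·Φ3). -/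
/-!
Algebraic model of the linearized Einstein–Maxwell system around Reissner–Nordström.
`B = A[ε]/(ε²)` is modeled by the dual numbers `DualNumber A` over a commutative
`ℝ`-algebra `A`, and the square-zero ideal `I = ε·B` by `smallIdeal A`.
Equality "modulo O(ε²)" is exact equality in `B`; products of two elements of `I` vanish.
-/

noncomputable section

open scoped DualNumber

/-- The square-zero ideal `I = ε·B` of the dual numbers `B = A[ε]/(ε²)`. -/
def smallIdeal (A : Type*) [CommRing A] : Ideal (DualNumber A) :=
  Ideal.span {(DualNumber.eps : DualNumber A)}

/-- The linearized setting: `ℝ`-linear derivations `e3, e4, eθ` on `B = DualNumber A`,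
background elements `κ, κ̄, ω, ω̄, ρ, ρF, Z, r` (with `r` and `κ̄` invertible, inverses
`ir` and `iκ'`), the background transport relations modulo the square-zero ideal `I`,
and the commutator relations valid on every element of `I`. -/
structure RNSetting (A : Type*) [CommRing A] [Algebra ℝ A] where
  e3 : Derivation ℝ (DualNumber A) (DualNumber A)
  e4 : Derivation ℝ (DualNumber A) (DualNumber A)
  eθ : Derivation ℝ (DualNumber A) (DualNumber A)
  κ : DualNumber A
  κ' : DualNumber A
  ω : DualNumber A
  ω' : DualNumber A
  ρ : DualNumber A
  ρF : DualNumber A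
  Z : DualNumber A
  r : DualNumber A
  ir : DualNumber A
  iκ' : DualNumber A
  hr : r * ir = 1
  hκ' : κ' * iκ' = 1
  pres_e3 : ∀ x ∈ smallIdeal A, e3 x ∈ smallIdeal A
  pres_e4 : ∀ x ∈ smallIdeal A, e4 x ∈ smallIdeal A
  pres_eθ : ∀ x ∈ smallIdeal A, eθ x ∈ smallIdeal A
  he3κ' : e3 κ' - (-((1/2 : ℝ) • (κ' * κ')) - 2 * ω' * κ') ∈ smallIdeal A
  he4κ' : e4 κ' - (-((1/2 : ℝ) • (κ * κ')) + 2 * ω * κ' + 2 * ρ) ∈ smallIdeal A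
  he3κ : e3 κ - (-((1/2 : ℝ) • (κ * κ')) + 2 * ω' * κ + 2 * ρ) ∈ smallIdeal A
  he4κ : e4 κ - (-((1/2 : ℝ) • (κ * κ)) - 2 * ω * κ) ∈ smallIdeal A
  hωω' : e3 ω + e4 ω' - (ρ + ρF ^ 2) ∈ smallIdeal A
  he3ρ : e3 ρ - (-((3/2 : ℝ) • (κ' * ρ)) - κ' * ρF ^ 2) ∈ smallIdeal A
  he4ρ : e4 ρ - (-((3/2 : ℝ) • (κ * ρ)) - κ * ρF ^ 2) ∈ smallIdeal A
  he3ρF : e3 ρF - (-(κ' * ρF)) ∈ smallIdeal A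
  he4ρF : e4 ρF - (-(κ * ρF)) ∈ smallIdeal A
  he3r : e3 r - (1/2 : ℝ) • (r * κ') ∈ smallIdeal A
  he4r : e4 r - (1/2 : ℝ) • (r * κ) ∈ smallIdeal A
  he3Z : e3 Z - (-((1/2 : ℝ) • (κ' * Z))) ∈ smallIdeal A
  he4Z : e4 Z - (-((1/2 : ℝ) • (κ * Z))) ∈ smallIdeal A
  heθZ : eθ Z - (ρ + (1/4 : ℝ) • (κ * κ') - ρF ^ 2 - Z ^ 2) ∈ smallIdeal A
  heθκ : eθ κ ∈ smallIdeal A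
  heθκ' : eθ κ' ∈ smallIdeal A
  heθω : eθ ω ∈ smallIdeal A
  heθω' : eθ ω' ∈ smallIdeal A
  heθρ : eθ ρ ∈ smallIdeal A
  heθρF : eθ ρF ∈ smallIdeal A
  heθr : eθ r ∈ smallIdeal A
  commθ3 : ∀ x ∈ smallIdeal A, eθ (e3 x) - e3 (eθ x) = (1/2 : ℝ) • (κ' * eθ x)
  commθ4 : ∀ x ∈ smallIdeal A, eθ (e4 x) - e4 (eθ x) = (1/2 : ℝ) • (κ * eθ x)
  comm34 : ∀ x ∈ smallIdeal A, e3 (e4 x) - e4 (e3 x) = 2 * ω' * e4 x - 2 * ω * e3 x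

namespace RNSetting

variable {A : Type*} [CommRing A] [Algebra ℝ A]

/-- The wave operator
`□u = −e4(e3 u) + eθ(eθ u) − (1/2)κ̄·e4(u) + (−(1/2)κ + 2ω)·e3(u) + Z·eθ(u)`. -/
def box (S : RNSetting A) (u : DualNumber A) : DualNumber A :=
  -S.e4 (S.e3 u) + S.eθ (S.eθ u) - (1/2 : ℝ) • (S.κ' * S.e4 u)
    + (-((1/2 : ℝ) • S.κ) + 2 * S.ω) * S.e3 u + S.Z * S.eθ u

/-- The operator `P̄(u) = r·κ̄⁻¹·e3(u) + (1/2)·r·u`. -/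
def Pb (S : RNSetting A) (u : DualNumber A) : DualNumber A :=
  S.r * S.iκ' * S.e3 u + (1/2 : ℝ) • (S.r * u)

/-- The operator `Q(u) = r·κ̄·e4(u) + (1/2)·r·κ·κ̄·u`. -/
def Qop (S : RNSetting A) (u : DualNumber A) : DualNumber A :=
  S.r * S.κ' * S.e4 u + (1/2 : ℝ) • (S.r * S.κ * S.κ' * u)


theorem smallIdeal_mul_eq_zero {x y : DualNumber A} (hx : x ∈ smallIdeal A)
    (hy : y ∈ smallIdeal A) : x * y = 0 := by
  rw [smallIdeal, Ideal.mem_span_singleton] at hx hy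
  obtain ⟨a, rfl⟩ := hx
  obtain ⟨b, rfl⟩ := hy
  linear_combination (a * b) * (DualNumber.eps_mul_eps (R := A))

theorem sub_mem_mul_right {a b z : DualNumber A} (h : a - b ∈ smallIdeal A)
    (hz : z ∈ smallIdeal A) : a * z = b * z := by
  have h0 := smallIdeal_mul_eq_zero h hz
  linear_combination h0

set_option maxHeartbeats 2000000 in
theorem aux (e3 e4 eθ : Derivation ℝ (DualNumber A) (DualNumber A))
    (κ κ' ω ω' ρ ρF Z r ir iκ' : DualNumber A)
    (hr : r * ir = 1) (hκ'inv : κ' * iκ' = 1)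
    (pres_e3 : ∀ x ∈ smallIdeal A, e3 x ∈ smallIdeal A)
    (pres_eθ : ∀ x ∈ smallIdeal A, eθ x ∈ smallIdeal A)
    (he3κ' : e3 κ' - (-((1/2 : ℝ) • (κ' * κ')) - 2 * ω' * κ') ∈ smallIdeal A)
    (he4κ' : e4 κ' - (-((1/2 : ℝ) • (κ * κ')) + 2 * ω * κ' + 2 * ρ) ∈ smallIdeal A)
    (he3r : e3 r - (1/2 : ℝ) • (r * κ') ∈ smallIdeal A)
    (he4r : e4 r - (1/2 : ℝ) • (r * κ) ∈ smallIdeal A)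
    (heθκ' : eθ κ' ∈ smallIdeal A)
    (heθr : eθ r ∈ smallIdeal A)
    (α frakf : DualNumber A) (hα : α ∈ smallIdeal A) (hfrakf : frakf ∈ smallIdeal A)
    (hTeuk : -e4 (e3 α) + eθ (eθ α)
        - algebraMap ℝ (DualNumber A) (1/2) * (κ' * e4 α)
        + (-(algebraMap ℝ (DualNumber A) (1/2) * κ) + 2 * ω) * e3 α + Z * eθ α
      = -(4 * ω' * e4 α) + (2 * κ + 4 * ω) * e3 α
        + (algebraMap ℝ (DualNumber A) (1/2) * (κ * κ') + 2 * ω * κ' - 4 * ρ + 4 * ρF ^ 2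
            - 4 * e4 ω' - 10 * (κ * ω') - 8 * (ω * ω') + 4 * Z ^ 2) * α
        + ρF * (2 * e4 frakf + (2 * κ + 4 * ω) * frakf)) :
    -e4 (e3 (r ^ 2 * κ' ^ 2 * α)) + eθ (eθ (r ^ 2 * κ' ^ 2 * α))
        - algebraMap ℝ (DualNumber A) (1/2) * (κ' * e4 (r ^ 2 * κ' ^ 2 * α))
        + (-(algebraMap ℝ (DualNumber A) (1/2) * κ) + 2 * ω) * e3 (r ^ 2 * κ' ^ 2 * α)
        + Z * eθ (r ^ 2 * κ' ^ 2 * α)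
      = ir * (2 * (κ * κ') - 4 * ρ)
          * (r * iκ' * e3 (r ^ 2 * κ' ^ 2 * α)
             + algebraMap ℝ (DualNumber A) (1/2) * (r * (r ^ 2 * κ' ^ 2 * α)))
        + (-(algebraMap ℝ (DualNumber A) (1/2) * (κ * κ')) - 4 * ρ + 4 * ρF ^ 2 + 4 * Z ^ 2)
            * (r ^ 2 * κ' ^ 2 * α)
        + ρF * (2 * ir * (r * κ' * e4 (r ^ 2 * κ' * frakf)
              + algebraMap ℝ (DualNumber A) (1/2) * (r * κ * κ' * (r ^ 2 * κ' * frakf)))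
            - 4 * ρ * (r ^ 2 * κ' * frakf)) := by
  obtain ⟨c, hcdef⟩ : ∃ c : DualNumber A, c = algebraMap ℝ (DualNumber A) (1/2) := ⟨_, rfl⟩
  rw [← hcdef] at hTeuk ⊢
  have hc : c + c = 1 := by
    rw [hcdef, ← map_add, show (1/2 + 1/2 : ℝ) = 1 by norm_num, map_one]
  have hc2 : ∀ x : DualNumber A, (1/2 : ℝ) • x = c * x := fun x => by
    rw [Algebra.smul_def, hcdef]
  have hsm : ∀ x : DualNumber A, (-4 : ℝ) • x = -4 * x := fun x => by
    rw [Algebra.smul_def, map_neg, map_ofNat]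
  simp only [hc2] at he3κ' he4κ' he3r he4r
  rw [show r ^ 2 * κ' ^ 2 * α = r * r * (κ' * κ') * α from by ring,
      show r ^ 2 * κ' * frakf = r * r * κ' * frakf from by ring]
  have hα3 : e3 α ∈ smallIdeal A := pres_e3 α hα
  have hαθ : eθ α ∈ smallIdeal A := pres_eθ α hα
  have A3r : ∀ z ∈ smallIdeal A, e3 r * z = c * (r * κ') * z := fun z hz =>
    sub_mem_mul_right he3r hz
  have A3κ' : ∀ z ∈ smallIdeal A, e3 κ' * z = (-(c * (κ' * κ')) - 2 * ω' * κ') * z :=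
    fun z hz => sub_mem_mul_right he3κ' hz
  have A4r : ∀ z ∈ smallIdeal A, e4 r * z = c * (r * κ) * z := fun z hz =>
    sub_mem_mul_right he4r hz
  have A4κ' : ∀ z ∈ smallIdeal A, e4 κ' * z = (-(c * (κ * κ')) + 2 * ω * κ' + 2 * ρ) * z :=
    fun z hz => sub_mem_mul_right he4κ' hz
  have Zθr : ∀ z ∈ smallIdeal A, eθ r * z = 0 := fun z hz =>
    smallIdeal_mul_eq_zero heθr hz
  have Zθκ' : ∀ z ∈ smallIdeal A, eθ κ' * z = 0 := fun z hz =>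
    smallIdeal_mul_eq_zero heθκ' hz
  -- first derivatives of Φ0 = f·α with f = r·r·(κ'·κ')
  have E3Φ0' : e3 (r * r * (κ' * κ') * α)
      = (-4 : ℝ) • (ω' * (r * r * (κ' * κ')) * α) + r * r * (κ' * κ') * e3 α := by
    rw [hsm]
    simp only [Derivation.leibniz, smul_eq_mul]
    linear_combination (2 * r * (κ' * κ')) * A3r α hα + (2 * (r * r) * κ') * A3κ' α hα
  have E3Φ0 : e3 (r * r * (κ' * κ') * α)
      = -4 * (ω' * (r * r * (κ' * κ')) * α) + r * r * (κ' * κ') * e3 α := by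
    rw [E3Φ0', hsm]
  have E4Φ0 : e4 (r * r * (κ' * κ') * α)
      = (4 * ω * (r * r * (κ' * κ')) + 4 * ρ * (r * r * κ')) * α
        + r * r * (κ' * κ') * e4 α := by
    simp only [Derivation.leibniz, smul_eq_mul]
    linear_combination (2 * r * (κ' * κ')) * A4r α hα + (2 * (r * r) * κ') * A4κ' α hα
  have EθΦ0 : eθ (r * r * (κ' * κ') * α) = r * r * (κ' * κ') * eθ α := by
    simp only [Derivation.leibniz, smul_eq_mul]
    linear_combination (2 * r * (κ' * κ')) * Zθr α hα + (2 * (r * r) * κ') * Zθκ' α hα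
  -- second derivatives
  have E43 : e4 (e3 (r * r * (κ' * κ') * α))
      = -4 * (e4 ω' * (r * r * (κ' * κ')) * α)
        - 4 * (ω' * ((4 * ω * (r * r * (κ' * κ')) + 4 * ρ * (r * r * κ')) * α))
        - 4 * (ω' * (r * r * (κ' * κ')) * e4 α)
        + (4 * ω * (r * r * (κ' * κ')) + 4 * ρ * (r * r * κ')) * e3 α
        + r * r * (κ' * κ') * e4 (e3 α) := by
    rw [E3Φ0']
    simp only [Derivation.map_add, Derivation.map_smul]
    simp only [Derivation.leibniz, smul_eq_mul, hsm]
    linear_combination (-8 * r * (κ' * κ') * ω') * A4r α hα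
      + (-8 * (r * r) * κ' * ω') * A4κ' α hα
      + (2 * r * (κ' * κ')) * A4r (e3 α) hα3
      + (2 * (r * r) * κ') * A4κ' (e3 α) hα3
  have Eθθ : eθ (eθ (r * r * (κ' * κ') * α)) = r * r * (κ' * κ') * eθ (eθ α) := by
    rw [EθΦ0]
    simp only [Derivation.leibniz, smul_eq_mul]
    linear_combination (2 * r * (κ' * κ')) * Zθr (eθ α) hαθ
      + (2 * (r * r) * κ') * Zθκ' (eθ α) hαθ
  have E4Φ3 : e4 (r * r * κ' * frakf)
      = (c * (κ * (r * r * κ')) + 2 * ω * (r * r * κ') + 2 * ρ * (r * r)) * frakf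
        + r * r * κ' * e4 frakf := by
    simp only [Derivation.leibniz, smul_eq_mul]
    linear_combination (2 * r * κ') * A4r frakf hfrakf + (r * r) * A4κ' frakf hfrakf
  rw [E43, Eθθ, E4Φ0, E3Φ0, EθΦ0, E4Φ3]
  linear_combination (r * r * (κ' * κ')) * hTeuk
    + ((-2 * (ω * κ') + 2 * (κ * ω')) * (r * r * (κ' * κ')) * α
        - 2 * κ * (r * r * (κ' * κ')) * ρF * frakf) * hc
    - ((2 * (κ * κ') - 4 * ρ)
          * (iκ' * (-4 * (ω' * (r * r * (κ' * κ')) * α) + r * r * (κ' * κ') * e3 α)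
             + c * (r * r * (κ' * κ') * α))
        + 2 * ρF * (κ' * ((c * (κ * (r * r * κ')) + 2 * ω * (r * r * κ') + 2 * ρ * (r * r)) * frakf
              + r * r * κ' * e4 frakf)
            + c * (κ * κ' * (r * r * κ' * frakf)))) * hr
    - ((2 * (κ * κ') - 4 * ρ) * (r * r * κ') * (-4 * (ω' * α) + e3 α)) * hκ'inv

set_option maxHeartbeats 1000000 in
/-- wave equation for `Φ0 = r²κ̄²·α`. -/
theorem box_Phi0 (S : RNSetting A) (α frakf : DualNumber A)
    (hα : α ∈ smallIdeal A) (hfrakf : frakf ∈ smallIdeal A)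
    (hTeuk : S.box α
      = -(4 * S.ω' * S.e4 α) + (2 * S.κ + 4 * S.ω) * S.e3 α
        + ((1/2 : ℝ) • (S.κ * S.κ') + 2 * S.ω * S.κ' - 4 * S.ρ + 4 * S.ρF ^ 2
            - 4 * S.e4 S.ω' - 10 * (S.κ * S.ω') - 8 * (S.ω * S.ω') + 4 * S.Z ^ 2) * α
        + S.ρF * (2 * S.e4 frakf + (2 * S.κ + 4 * S.ω) * frakf))
    (Φ0 Φ1 Φ3 : DualNumber A)
    (hΦ0 : Φ0 = S.r ^ 2 * S.κ' ^ 2 * α) (hΦ1 : Φ1 = S.Pb Φ0)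
    (hΦ3 : Φ3 = S.r ^ 2 * S.κ' * frakf) :
    S.box Φ0
      = S.ir * (2 * (S.κ * S.κ') - 4 * S.ρ) * Φ1
        + (-((1/2 : ℝ) • (S.κ * S.κ')) - 4 * S.ρ + 4 * S.ρF ^ 2 + 4 * S.Z ^ 2) * Φ0
        + S.ρF * (2 * S.ir * S.Qop Φ3 - 4 * S.ρ * Φ3) := by
  subst hΦ0 hΦ1 hΦ3
  have H := aux S.e3 S.e4 S.eθ S.κ S.κ' S.ω S.ω' S.ρ S.ρF S.Z S.r S.ir S.iκ'
    S.hr S.hκ' S.pres_e3 S.pres_eθ S.he3κ' S.he4κ' S.he3r S.he4r S.heθκ' S.heθr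
    α frakf hα hfrakf (by simpa only [box, Algebra.smul_def] using hTeuk)
  simp only [box, Pb, Qop, Algebra.smul_def]
  linear_combination H

end RNSetting
end
end

section
/- (Regge–Wheeler type equation for 𝔮^F = Φ4.) In the linearized setting, let α, 𝔣 ∈ I, define Φ0 := r²κ̄²·α, Φ1 := P̄(Φ0), Φ2 := P̄(Φ1), Φ3 := r²κ̄·𝔣, Φ4 := P̄(Φ3), and assume, exactly in B: □Φ3 = (1/r)·(κκ̄ − 2ρ)·Φ4 + (−κκ̄ − 3ρ + 4Z²)·Φ3 + ρF·(−(2/r)·Φ1 − Φ0). Then, exactly in B: □Φ4 = (−κκ̄ − 3ρ + 4Z²)·Φ4 + ρF·(−(2/r)·Φ2 + 4r·ρF·Φ3). -/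
/-!
Algebraic model of the linearized Einstein–Maxwell system around Reissner–Nordström.
`B = A[ε]/(ε²)` is modeled by the dual numbers `DualNumber A` over a commutative
`ℝ`-algebra `A`, and the square-zero ideal `I = ε·B` by `smallIdeal A`.
Equality "modulo O(ε²)" is exact equality in `B`; products of two elements of `I` vanish.
-/

noncomputable section

open scoped DualNumber

namespace RNSetting

variable {A : Type*} [CommRing A] [Algebra ℝ A]

set_option maxHeartbeats 4000000
private lemma memEps {A : Type*} [CommRing A] :
    (DualNumber.eps : DualNumber A) ∈ smallIdeal A :=
  Ideal.subset_span rfl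

private lemma mulI {A : Type*} [CommRing A] {x y : DualNumber A}
    (hx : x ∈ smallIdeal A) (hy : y ∈ smallIdeal A) : x * y = 0 := by
  obtain ⟨a, ha⟩ := Ideal.mem_span_singleton'.mp hx
  obtain ⟨b, hb⟩ := Ideal.mem_span_singleton'.mp hy
  rw [← ha, ← hb, show a * DualNumber.eps * (b * DualNumber.eps)
    = a * b * ((DualNumber.eps : DualNumber A) * DualNumber.eps) by ring,
    DualNumber.eps_mul_eps, mul_zero]

private lemma alg32 {A : Type*} [CommRing A] [Algebra ℝ A] :
    (algebraMap ℝ (DualNumber A)) (3/2) = 3 * (algebraMap ℝ (DualNumber A)) (1/2) := by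
  rw [show (3/2:ℝ) = 3 * (1/2) by norm_num, map_mul, map_ofNat]

/-- Regge–Wheeler type equation for `𝔮^F = Φ4 = P̄(r²κ̄·𝔣)`. -/
theorem box_Phi4 (S : RNSetting A) (α frakf : DualNumber A)
    (hα : α ∈ smallIdeal A) (hfrakf : frakf ∈ smallIdeal A)
    (Φ0 Φ1 Φ2 Φ3 Φ4 : DualNumber A)
    (hΦ0 : Φ0 = S.r ^ 2 * S.κ' ^ 2 * α) (hΦ1 : Φ1 = S.Pb Φ0) (hΦ2 : Φ2 = S.Pb Φ1)
    (hΦ3 : Φ3 = S.r ^ 2 * S.κ' * frakf) (hΦ4 : Φ4 = S.Pb Φ3)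
    (hbox3 : S.box Φ3
      = S.ir * (S.κ * S.κ' - 2 * S.ρ) * Φ4
        + (-(S.κ * S.κ') - 3 * S.ρ + 4 * S.Z ^ 2) * Φ3
        + S.ρF * (-(2 * S.ir * Φ1) - Φ0)) :
    S.box Φ4
      = (-(S.κ * S.κ') - 3 * S.ρ + 4 * S.Z ^ 2) * Φ4
        + S.ρF * (-(2 * S.ir * Φ2) + 4 * (S.r * S.ρF) * Φ3) := by
  have hΦ0I : Φ0 ∈ smallIdeal A := by rw [hΦ0]; exact Ideal.mul_mem_left _ _ hα
  have hΦ3I : Φ3 ∈ smallIdeal A := by rw [hΦ3]; exact Ideal.mul_mem_left _ _ hfrakf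
  have hPbI : ∀ x ∈ smallIdeal A, S.Pb x ∈ smallIdeal A := by
    intro x hx
    simp only [Pb]
    exact add_mem (Ideal.mul_mem_left _ _ (S.pres_e3 _ hx))
      (by rw [Algebra.smul_def]; exact Ideal.mul_mem_left _ _ (Ideal.mul_mem_left _ _ hx))
  have hΦ1I : Φ1 ∈ smallIdeal A := by rw [hΦ1]; exact hPbI _ hΦ0I
  have hΦ4I : Φ4 ∈ smallIdeal A := by rw [hΦ4]; exact hPbI _ hΦ3I
  have hhalf : (algebraMap ℝ (DualNumber A)) (1/2) * 2 = 1 := by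
    rw [show ((2:DualNumber A)) = (algebraMap ℝ (DualNumber A)) 2 from (map_ofNat _ 2).symm, ← map_mul]
    norm_num
  obtain ⟨c1, hc_c1⟩ := Ideal.mem_span_singleton'.mp S.he3κ'
  have d3kb : (S.e3 S.κ') = c1 * DualNumber.eps + (-(algebraMap ℝ (DualNumber A)) (1/2) * S.κ' * S.κ') + (-((S.κ' * S.ω' + S.κ' * S.ω'))) := by
    try simp only [Algebra.smul_def, alg32] at hc_c1
    linear_combination -hc_c1
  obtain ⟨c2, hc_c2⟩ := Ideal.mem_span_singleton'.mp S.he4κ'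
  have d4kb : (S.e4 S.κ') = c2 * DualNumber.eps + (-(algebraMap ℝ (DualNumber A)) (1/2) * S.κ * S.κ') + (S.κ' * S.ω + S.κ' * S.ω) + (S.ρ + S.ρ) := by
    try simp only [Algebra.smul_def, alg32] at hc_c2
    linear_combination -hc_c2
  obtain ⟨c3, hc_c3⟩ := Ideal.mem_span_singleton'.mp S.he3κ
  have d3k : (S.e3 S.κ) = c3 * DualNumber.eps + (-(algebraMap ℝ (DualNumber A)) (1/2) * S.κ * S.κ') + (S.κ * S.ω' + S.κ * S.ω') + (S.ρ + S.ρ) := by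
    try simp only [Algebra.smul_def, alg32] at hc_c3
    linear_combination -hc_c3
  obtain ⟨c4, hc_c4⟩ := Ideal.mem_span_singleton'.mp S.he4κ
  have d4k : (S.e4 S.κ) = c4 * DualNumber.eps + (-(algebraMap ℝ (DualNumber A)) (1/2) * S.κ * S.κ) + (-((S.κ * S.ω + S.κ * S.ω))) := by
    try simp only [Algebra.smul_def, alg32] at hc_c4
    linear_combination -hc_c4
  obtain ⟨c6, hc_c6⟩ := Ideal.mem_span_singleton'.mp S.he3ρ
  have d3rho : (S.e3 S.ρ) = c6 * DualNumber.eps + (-(((algebraMap ℝ (DualNumber A)) (1/2) * S.κ' * S.ρ + (algebraMap ℝ (DualNumber A)) (1/2) * S.κ' * S.ρ + (algebraMap ℝ (DualNumber A)) (1/2) * S.κ' * S.ρ))) + (-S.κ' * S.ρF * S.ρF) := by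
    try simp only [Algebra.smul_def, alg32] at hc_c6
    linear_combination -hc_c6
  obtain ⟨c7, hc_c7⟩ := Ideal.mem_span_singleton'.mp S.he4ρ
  have d4rho : (S.e4 S.ρ) = c7 * DualNumber.eps + (-(((algebraMap ℝ (DualNumber A)) (1/2) * S.κ * S.ρ + (algebraMap ℝ (DualNumber A)) (1/2) * S.κ * S.ρ + (algebraMap ℝ (DualNumber A)) (1/2) * S.κ * S.ρ))) + (-S.κ * S.ρF * S.ρF) := by
    try simp only [Algebra.smul_def, alg32] at hc_c7
    linear_combination -hc_c7
  obtain ⟨c8, hc_c8⟩ := Ideal.mem_span_singleton'.mp S.he3ρF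
  have d3rF : (S.e3 S.ρF) = c8 * DualNumber.eps + (-S.κ' * S.ρF) := by
    try simp only [Algebra.smul_def, alg32] at hc_c8
    linear_combination -hc_c8
  obtain ⟨c9, hc_c9⟩ := Ideal.mem_span_singleton'.mp S.he4ρF
  have d4rF : (S.e4 S.ρF) = c9 * DualNumber.eps + (-S.κ * S.ρF) := by
    try simp only [Algebra.smul_def, alg32] at hc_c9
    linear_combination -hc_c9
  obtain ⟨c10, hc_c10⟩ := Ideal.mem_span_singleton'.mp S.he3r
  have d3r : (S.e3 S.r) = c10 * DualNumber.eps + (algebraMap ℝ (DualNumber A)) (1/2) * S.κ' * S.r := by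
    try simp only [Algebra.smul_def, alg32] at hc_c10
    linear_combination -hc_c10
  obtain ⟨c11, hc_c11⟩ := Ideal.mem_span_singleton'.mp S.he4r
  have d4r : (S.e4 S.r) = c11 * DualNumber.eps + (algebraMap ℝ (DualNumber A)) (1/2) * S.κ * S.r := by
    try simp only [Algebra.smul_def, alg32] at hc_c11
    linear_combination -hc_c11
  obtain ⟨c12, hc_c12⟩ := Ideal.mem_span_singleton'.mp S.he3Z
  have d3Z : (S.e3 S.Z) = (-S.Z * (algebraMap ℝ (DualNumber A)) (1/2) * S.κ') + c12 * DualNumber.eps := by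
    try simp only [Algebra.smul_def, alg32] at hc_c12
    linear_combination -hc_c12
  obtain ⟨c16, hc_c16⟩ := Ideal.mem_span_singleton'.mp S.he4Z
  have d4Z : (S.e4 S.Z) = (-S.Z * (algebraMap ℝ (DualNumber A)) (1/2) * S.κ) + c16 * DualNumber.eps := by
    try simp only [Algebra.smul_def, alg32] at hc_c16
    linear_combination -hc_c16
  obtain ⟨c14, hc_c14⟩ := Ideal.mem_span_singleton'.mp S.heθr
  have dtr : (S.eθ S.r) = c14 * DualNumber.eps := by
    try simp only [Algebra.smul_def, alg32] at hc_c14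
    linear_combination -hc_c14
  obtain ⟨c15, hc_c15⟩ := Ideal.mem_span_singleton'.mp S.heθκ'
  have dtkb : (S.eθ S.κ') = c15 * DualNumber.eps := by
    try simp only [Algebra.smul_def, alg32] at hc_c15
    linear_combination -hc_c15
  obtain ⟨c5, hc_c5⟩ := Ideal.mem_span_singleton'.mp S.hωω'
  have dww : (S.e3 S.ω) + (S.e4 S.ω') = c5 * DualNumber.eps + S.ρF * S.ρF + S.ρ := by
    linear_combination -hc_c5
  have i3r : (S.e3 S.ir) * S.r + (S.e3 S.r) * S.ir = 0 := by
    have t := congrArg S.e3 S.hr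
    simp only [map_add, map_sub, map_neg, map_zero, Derivation.leibniz, smul_eq_mul, Derivation.map_algebraMap, Derivation.map_one_eq_zero] at t
    linear_combination t
  have i3kb : (S.e3 S.iκ') * S.κ' + (S.e3 S.κ') * S.iκ' = 0 := by
    have t := congrArg S.e3 S.hκ'
    simp only [map_add, map_sub, map_neg, map_zero, Derivation.leibniz, smul_eq_mul, Derivation.map_algebraMap, Derivation.map_one_eq_zero] at t
    linear_combination t
  have i4kb : (S.e4 S.iκ') * S.κ' + (S.e4 S.κ') * S.iκ' = 0 := by
    have t := congrArg S.e4 S.hκ'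
    simp only [map_add, map_sub, map_neg, map_zero, Derivation.leibniz, smul_eq_mul, Derivation.map_algebraMap, Derivation.map_one_eq_zero] at t
    linear_combination t
  have itkb : (S.eθ S.iκ') * S.κ' + (S.eθ S.κ') * S.iκ' = 0 := by
    have t := congrArg S.eθ S.hκ'
    simp only [map_add, map_sub, map_neg, map_zero, Derivation.leibniz, smul_eq_mul, Derivation.map_algebraMap, Derivation.map_one_eq_zero] at t
    linear_combination t
  have i43kb : (S.e3 S.iκ') * (S.e4 S.κ') + (S.e3 S.κ') * (S.e4 S.iκ') + (S.e4 (S.e3 S.iκ')) * S.κ' + (S.e4 (S.e3 S.κ')) * S.iκ' = 0 := by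
    have t := congrArg S.e4 i3kb
    simp only [map_add, map_sub, map_neg, map_zero, Derivation.leibniz, smul_eq_mul, Derivation.map_algebraMap, Derivation.map_one_eq_zero] at t
    linear_combination t
  have ittkb : (S.eθ (S.eθ S.iκ')) * S.κ' + (S.eθ (S.eθ S.κ')) * S.iκ' + ((S.eθ S.iκ') * (S.eθ S.κ') + (S.eθ S.iκ') * (S.eθ S.κ')) = 0 := by
    have t := congrArg S.eθ itkb
    simp only [map_add, map_sub, map_neg, map_zero, Derivation.leibniz, smul_eq_mul, Derivation.map_algebraMap, Derivation.map_one_eq_zero] at t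
    linear_combination t
  have j43r : (S.e4 (S.e3 S.r)) = c10 * (S.e4 DualNumber.eps) + (S.e4 c10) * DualNumber.eps + (S.e4 S.κ') * (algebraMap ℝ (DualNumber A)) (1/2) * S.r + (S.e4 S.r) * (algebraMap ℝ (DualNumber A)) (1/2) * S.κ' := by
    have t := congrArg S.e4 d3r
    simp only [map_add, map_sub, map_neg, map_zero, Derivation.leibniz, smul_eq_mul, Derivation.map_algebraMap, Derivation.map_one_eq_zero] at t
    linear_combination t
  have j43kb : (S.e4 (S.e3 S.κ')) = c1 * (S.e4 DualNumber.eps) + (S.e4 c1) * DualNumber.eps + (-(((S.e4 S.κ') * (algebraMap ℝ (DualNumber A)) (1/2) * S.κ' + (S.e4 S.κ') * (algebraMap ℝ (DualNumber A)) (1/2) * S.κ'))) + (-(((S.e4 S.κ') * S.ω' + (S.e4 S.κ') * S.ω'))) + (-(((S.e4 S.ω') * S.κ' + (S.e4 S.ω') * S.κ'))) := by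
    have t := congrArg S.e4 d3kb
    simp only [map_add, map_sub, map_neg, map_zero, Derivation.leibniz, smul_eq_mul, Derivation.map_algebraMap, Derivation.map_one_eq_zero] at t
    linear_combination t
  have j34kb : (S.e3 (S.e4 S.κ')) = c2 * (S.e3 DualNumber.eps) + (S.e3 c2) * DualNumber.eps + (-(S.e3 S.κ) * (algebraMap ℝ (DualNumber A)) (1/2) * S.κ') + (-(S.e3 S.κ') * (algebraMap ℝ (DualNumber A)) (1/2) * S.κ) + ((S.e3 S.κ') * S.ω + (S.e3 S.κ') * S.ω) + ((S.e3 S.ρ) + (S.e3 S.ρ)) + ((S.e3 S.ω) * S.κ' + (S.e3 S.ω) * S.κ') := by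
    have t := congrArg S.e3 d4kb
    simp only [map_add, map_sub, map_neg, map_zero, Derivation.leibniz, smul_eq_mul, Derivation.map_algebraMap, Derivation.map_one_eq_zero] at t
    linear_combination t
  have jttr : (S.eθ (S.eθ S.r)) = c14 * (S.eθ DualNumber.eps) + DualNumber.eps * (S.eθ c14) := by
    have t := congrArg S.eθ dtr
    simp only [map_add, map_sub, map_neg, map_zero, Derivation.leibniz, smul_eq_mul, Derivation.map_algebraMap, Derivation.map_one_eq_zero] at t
    linear_combination t
  have jttkb : (S.eθ (S.eθ S.κ')) = c15 * (S.eθ DualNumber.eps) + DualNumber.eps * (S.eθ c15) := by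
    have t := congrArg S.eθ dtkb
    simp only [map_add, map_sub, map_neg, map_zero, Derivation.leibniz, smul_eq_mul, Derivation.map_algebraMap, Derivation.map_one_eq_zero] at t
    linear_combination t
  have hP4e : Φ4 = Φ3 * (algebraMap ℝ (DualNumber A)) (1/2) * S.r + (S.e3 Φ3) * S.iκ' * S.r := by
    have t := hΦ4
    simp only [Pb, Algebra.smul_def] at t
    linear_combination t
  have hP1e : Φ1 = Φ0 * (algebraMap ℝ (DualNumber A)) (1/2) * S.r + (S.e3 Φ0) * S.iκ' * S.r := by
    have t := hΦ1
    simp only [Pb, Algebra.smul_def] at t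
    linear_combination t
  have hP2e : Φ2 = Φ1 * (algebraMap ℝ (DualNumber A)) (1/2) * S.r + (S.e3 Φ1) * S.iκ' * S.r := by
    have t := hΦ2
    simp only [Pb, Algebra.smul_def] at t
    linear_combination t
  have hE34 : (S.e3 Φ4) = Φ3 * (S.e3 S.r) * (algebraMap ℝ (DualNumber A)) (1/2) + (S.e3 Φ3) * (S.e3 S.iκ') * S.r + (S.e3 Φ3) * (S.e3 S.r) * S.iκ' + (S.e3 Φ3) * (algebraMap ℝ (DualNumber A)) (1/2) * S.r + (S.e3 (S.e3 Φ3)) * S.iκ' * S.r := by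
    have t := congrArg S.e3 hP4e
    simp only [map_add, map_sub, map_neg, map_zero, Derivation.leibniz, smul_eq_mul, Derivation.map_algebraMap, Derivation.map_one_eq_zero] at t
    linear_combination t
  have hE44 : (S.e4 Φ4) = Φ3 * (S.e4 S.r) * (algebraMap ℝ (DualNumber A)) (1/2) + (S.e3 Φ3) * (S.e4 S.iκ') * S.r + (S.e3 Φ3) * (S.e4 S.r) * S.iκ' + (S.e4 Φ3) * (algebraMap ℝ (DualNumber A)) (1/2) * S.r + (S.e4 (S.e3 Φ3)) * S.iκ' * S.r := by
    have t := congrArg S.e4 hP4e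
    simp only [map_add, map_sub, map_neg, map_zero, Derivation.leibniz, smul_eq_mul, Derivation.map_algebraMap, Derivation.map_one_eq_zero] at t
    linear_combination t
  have hET4 : (S.eθ Φ4) = Φ3 * (S.eθ S.r) * (algebraMap ℝ (DualNumber A)) (1/2) + (S.e3 Φ3) * (S.eθ S.iκ') * S.r + (S.e3 Φ3) * (S.eθ S.r) * S.iκ' + (S.eθ Φ3) * (algebraMap ℝ (DualNumber A)) (1/2) * S.r + (S.eθ (S.e3 Φ3)) * S.iκ' * S.r := by
    have t := congrArg S.eθ hP4e
    simp only [map_add, map_sub, map_neg, map_zero, Derivation.leibniz, smul_eq_mul, Derivation.map_algebraMap, Derivation.map_one_eq_zero] at t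
    linear_combination t
  have hE434 : (S.e4 (S.e3 Φ4)) = Φ3 * (S.e4 (S.e3 S.r)) * (algebraMap ℝ (DualNumber A)) (1/2) + (S.e3 Φ3) * (S.e3 S.iκ') * (S.e4 S.r) + (S.e3 Φ3) * (S.e3 S.r) * (S.e4 S.iκ') + (S.e3 Φ3) * (S.e4 (S.e3 S.iκ')) * S.r + (S.e3 Φ3) * (S.e4 (S.e3 S.r)) * S.iκ' + (S.e3 Φ3) * (S.e4 S.r) * (algebraMap ℝ (DualNumber A)) (1/2) + (S.e3 (S.e3 Φ3)) * (S.e4 S.iκ') * S.r + (S.e3 (S.e3 Φ3)) * (S.e4 S.r) * S.iκ' + (S.e3 S.iκ') * (S.e4 (S.e3 Φ3)) * S.r + (S.e3 S.r) * (S.e4 Φ3) * (algebraMap ℝ (DualNumber A)) (1/2) + (S.e3 S.r) * (S.e4 (S.e3 Φ3)) * S.iκ' + (S.e4 (S.e3 Φ3)) * (algebraMap ℝ (DualNumber A)) (1/2) * S.r + (S.e4 (S.e3 (S.e3 Φ3))) * S.iκ' * S.r := by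
    have t := congrArg S.e4 hE34
    simp only [map_add, map_sub, map_neg, map_zero, Derivation.leibniz, smul_eq_mul, Derivation.map_algebraMap, Derivation.map_one_eq_zero] at t
    linear_combination t
  have hEtt4 : (S.eθ (S.eθ Φ4)) = Φ3 * (S.eθ (S.eθ S.r)) * (algebraMap ℝ (DualNumber A)) (1/2) + (S.e3 Φ3) * (S.eθ (S.eθ S.iκ')) * S.r + (S.e3 Φ3) * (S.eθ (S.eθ S.r)) * S.iκ' + ((S.e3 Φ3) * (S.eθ S.iκ') * (S.eθ S.r) + (S.e3 Φ3) * (S.eθ S.iκ') * (S.eθ S.r)) + ((S.eθ Φ3) * (S.eθ S.r) * (algebraMap ℝ (DualNumber A)) (1/2) + (S.eθ Φ3) * (S.eθ S.r) * (algebraMap ℝ (DualNumber A)) (1/2)) + ((S.eθ (S.e3 Φ3)) * (S.eθ S.iκ') * S.r + (S.eθ (S.e3 Φ3)) * (S.eθ S.iκ') * S.r) + ((S.eθ (S.e3 Φ3)) * (S.eθ S.r) * S.iκ' + (S.eθ (S.e3 Φ3)) * (S.eθ S.r) * S.iκ') + (S.eθ (S.eθ Φ3)) * (algebraMap ℝ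 (DualNumber A)) (1/2) * S.r + (S.eθ (S.eθ (S.e3 Φ3))) * S.iκ' * S.r := by
    have t := congrArg S.eθ hET4
    simp only [map_add, map_sub, map_neg, map_zero, Derivation.leibniz, smul_eq_mul, Derivation.map_algebraMap, Derivation.map_one_eq_zero] at t
    linear_combination t
  have E0 : S.Z * (S.eθ Φ3) + (-(S.e3 Φ3) * (algebraMap ℝ (DualNumber A)) (1/2) * S.κ) + ((S.e3 Φ3) * S.ω + (S.e3 Φ3) * S.ω) + (-(S.e4 Φ3) * (algebraMap ℝ (DualNumber A)) (1/2) * S.κ') + (-(S.e4 (S.e3 Φ3))) + (S.eθ (S.eθ Φ3)) = (-Φ0 * S.ρF) + (-((Φ1 * S.ir * S.ρF + Φ1 * S.ir * S.ρF))) + (Φ3 * S.Z * S.Z + Φ3 * S.Z * S.Z + Φ3 * S.Z * S.Z + Φ3 * S.Z * S.Z) + (-Φ3 * S.κ * S.κ') + (-((Φ3 * S.ρ + Φ3 * S.ρ + Φ3 * S.ρ))) + Φ4 * S.ir * S.κ * S.κ' + (-((Φ4 * S.ir * S.ρ + Φ4 * S.ir * S.ρ))) := by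
    have t := hbox3
    simp only [box, Algebra.smul_def] at t
    linear_combination t
  have E1 : S.Z * (S.e3 (S.eθ Φ3)) + (-(S.e3 Φ3) * (S.e3 S.κ) * (algebraMap ℝ (DualNumber A)) (1/2)) + ((S.e3 Φ3) * (S.e3 S.ω) + (S.e3 Φ3) * (S.e3 S.ω)) + (S.e3 S.Z) * (S.eθ Φ3) + (-(S.e3 (S.e3 Φ3)) * (algebraMap ℝ (DualNumber A)) (1/2) * S.κ) + ((S.e3 (S.e3 Φ3)) * S.ω + (S.e3 (S.e3 Φ3)) * S.ω) + (-(S.e3 (S.e4 Φ3)) * (algebraMap ℝ (DualNumber A)) (1/2) * S.κ') + (-(S.e3 (S.e4 (S.e3 Φ3)))) + (S.e3 (S.eθ (S.eθ Φ3))) + (-(S.e3 S.κ') * (S.e4 Φ3) * (algebraMap ℝ (DualNumber A)) (1/2)) = (-Φ0 * (S.e3 S.ρF)) + (-((Φ1 * (S.e3 S.ir) * S.ρF + Φ1 * (S.e3 S.ir) * S.ρF))) + (-((Φ1 * (S.e3 S.ρF) * S.ir + Φ1 * (S.e3 S.ρF) * S.ir))) + (Φ3 * S.Z * (S.e3 S.Z)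 + Φ3 * S.Z * (S.e3 S.Z) + Φ3 * S.Z * (S.e3 S.Z) + Φ3 * S.Z * (S.e3 S.Z) + Φ3 * S.Z * (S.e3 S.Z) + Φ3 * S.Z * (S.e3 S.Z) + Φ3 * S.Z * (S.e3 S.Z) + Φ3 * S.Z * (S.e3 S.Z)) + (-Φ3 * (S.e3 S.κ) * S.κ') + (-Φ3 * (S.e3 S.κ') * S.κ) + (-((Φ3 * (S.e3 S.ρ) + Φ3 * (S.e3 S.ρ) + Φ3 * (S.e3 S.ρ)))) + Φ4 * (S.e3 S.ir) * S.κ * S.κ' + (-((Φ4 * (S.e3 S.ir) * S.ρ + Φ4 * (S.e3 S.ir) * S.ρ))) + Φ4 * (S.e3 S.κ) * S.ir * S.κ' + Φ4 * (S.e3 S.κ') * S.ir * S.κ + (-((Φ4 * (S.e3 S.ρ) * S.ir + Φ4 * (S.e3 S.ρ) * S.ir))) + (S.Z * S.Z * (S.e3 Φ3) + S.Z * S.Z * (S.e3 Φ3) + S.Z * S.Z * (S.e3 Φ3) + S.Z * S.Z * (S.e3 Φ3)) + (-(S.e3 Φ0) * S.ρF) + (-(((S.e3 Φ1) * S.ir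 * S.ρF + (S.e3 Φ1) * S.ir * S.ρF))) + (-(S.e3 Φ3) * S.κ * S.κ') + (-(((S.e3 Φ3) * S.ρ + (S.e3 Φ3) * S.ρ + (S.e3 Φ3) * S.ρ))) + (S.e3 Φ4) * S.ir * S.κ * S.κ' + (-(((S.e3 Φ4) * S.ir * S.ρ + (S.e3 Φ4) * S.ir * S.ρ))) := by
    have t := congrArg S.e3 E0
    simp only [map_add, map_sub, map_neg, map_zero, Derivation.leibniz, smul_eq_mul, Derivation.map_algebraMap, Derivation.map_one_eq_zero] at t
    linear_combination t
  have Cm34u : (S.e3 (S.e4 Φ3)) + (-(S.e4 (S.e3 Φ3))) = (-(((S.e3 Φ3) * S.ω + (S.e3 Φ3) * S.ω))) + ((S.e4 Φ3) * S.ω' + (S.e4 Φ3) * S.ω') := by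
    have t := S.comm34 Φ3 hΦ3I
    linear_combination t
  have Cm34u3 : (S.e3 (S.e4 (S.e3 Φ3))) + (-(S.e4 (S.e3 (S.e3 Φ3)))) = (-(((S.e3 (S.e3 Φ3)) * S.ω + (S.e3 (S.e3 Φ3)) * S.ω))) + ((S.e4 (S.e3 Φ3)) * S.ω' + (S.e4 (S.e3 Φ3)) * S.ω') := by
    have t := S.comm34 (S.e3 Φ3) (S.pres_e3 _ hΦ3I)
    linear_combination t
  have Cmt3u : (-(S.e3 (S.eθ Φ3))) + (S.eθ (S.e3 Φ3)) = (S.eθ Φ3) * (algebraMap ℝ (DualNumber A)) (1/2) * S.κ' := by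
    have t := S.commθ3 Φ3 hΦ3I
    simp only [Algebra.smul_def] at t
    linear_combination t
  have Cmt3ut : (-(S.e3 (S.eθ (S.eθ Φ3)))) + (S.eθ (S.e3 (S.eθ Φ3))) = (S.eθ (S.eθ Φ3)) * (algebraMap ℝ (DualNumber A)) (1/2) * S.κ' := by
    have t := S.commθ3 (S.eθ Φ3) (S.pres_eθ _ hΦ3I)
    simp only [Algebra.smul_def] at t
    linear_combination t
  have C34K : (S.e3 Φ3) * (S.e3 (S.e4 S.κ')) + (-(S.e3 Φ3) * (S.e4 (S.e3 S.κ'))) + (S.e3 (S.e4 (S.e3 Φ3))) * S.κ' + (-(S.e4 (S.e3 (S.e3 Φ3))) * S.κ') = (-(((S.e3 Φ3) * (S.e3 S.κ') * S.ω + (S.e3 Φ3) * (S.e3 S.κ') * S.ω))) + ((S.e3 Φ3) * (S.e4 S.κ') * S.ω' + (S.e3 Φ3) * (S.e4 S.κ') * S.ω') + (-(((S.e3 (S.e3 Φ3)) * S.κ' * S.ω + (S.e3 (S.e3 Φ3)) * S.κ' * S.ω))) + ((S.e4 (S.e3 Φ3)) * S.κ' * S.ω' + (S.e4 (S.e3 Φ3))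 * S.κ' * S.ω') := by
    have t := S.comm34 (S.κ' * S.e3 Φ3) (Ideal.mul_mem_left _ _ (S.pres_e3 _ hΦ3I))
    simp only [map_add, map_sub, map_neg, map_zero, Derivation.leibniz, smul_eq_mul, Derivation.map_algebraMap, Derivation.map_one_eq_zero] at t
    linear_combination t
  have CX2 : (-(S.eθ (S.e3 (S.eθ Φ3)))) + (S.eθ (S.eθ (S.e3 Φ3))) = (S.eθ Φ3) * (S.eθ S.κ') * (algebraMap ℝ (DualNumber A)) (1/2) + (S.eθ (S.eθ Φ3)) * (algebraMap ℝ (DualNumber A)) (1/2) * S.κ' := by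
    have t := congrArg S.eθ Cmt3u
    simp only [map_add, map_sub, map_neg, map_zero, Derivation.leibniz, smul_eq_mul, Derivation.map_algebraMap, Derivation.map_one_eq_zero] at t
    linear_combination t
  have zz0 : S.e3 DualNumber.eps * S.e3 Φ3 = 0 := mulI (S.pres_e3 _ memEps) (S.pres_e3 _ hΦ3I)
  have zz1 : S.e4 DualNumber.eps * Φ3 = 0 := mulI (S.pres_e4 _ memEps) hΦ3I
  have zz2 : S.e4 DualNumber.eps * S.e3 Φ3 = 0 := mulI (S.pres_e4 _ memEps) (S.pres_e3 _ hΦ3I)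
  have zz3 : DualNumber.eps * Φ0 = 0 := mulI memEps hΦ0I
  have zz4 : DualNumber.eps * Φ1 = 0 := mulI memEps hΦ1I
  have zz5 : DualNumber.eps * Φ3 = 0 := mulI memEps hΦ3I
  have zz6 : DualNumber.eps * S.e3 Φ3 = 0 := mulI memEps (S.pres_e3 _ hΦ3I)
  have zz7 : DualNumber.eps * S.e3 (S.e3 Φ3) = 0 := mulI memEps (S.pres_e3 _ (S.pres_e3 _ hΦ3I))
  have zz8 : DualNumber.eps * S.eθ Φ3 = 0 := mulI memEps (S.pres_eθ _ hΦ3I)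
  have zz9 : DualNumber.eps * S.eθ (S.e3 Φ3) = 0 := mulI memEps (S.pres_eθ _ (S.pres_e3 _ hΦ3I))
  have zz10 : DualNumber.eps * S.eθ (S.eθ Φ3) = 0 := mulI memEps (S.pres_eθ _ (S.pres_eθ _ hΦ3I))
  have zz11 : S.eθ DualNumber.eps * Φ3 = 0 := mulI (S.pres_eθ _ memEps) hΦ3I
  have zz12 : S.eθ DualNumber.eps * S.e3 Φ3 = 0 := mulI (S.pres_eθ _ memEps) (S.pres_e3 _ hΦ3I)
  simp only [box, Algebra.smul_def]
  linear_combination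
    ((-1)) * hE434 +
    ((1)) * hEtt4 +
    ((-1) * (algebraMap ℝ (DualNumber A)) (1/2) * S.κ + (-2) * S.iκ' * S.ρ + (1) * S.κ + (2) * S.ω) * hE34 +
    ((1) * Φ0 * (S.e3 S.iκ') * S.r * S.ρF + (-1) * Φ0 * (algebraMap ℝ (DualNumber A)) (1/2) * S.iκ' * S.κ' * S.r * S.ρF + (-1) * Φ0 * (algebraMap ℝ (DualNumber A)) (1/2) * S.r * S.ρF + (-2) * Φ0 * S.iκ' * S.r * S.ρF * S.ω' + (1) * Φ0 * S.r * S.ρF + (2) * Φ1 * (S.e3 S.iκ') * S.ρF + (-2) * Φ1 * (algebraMap ℝ (DualNumber A)) (1/2) * S.iκ' * S.κ' * S.ρF + (-4) * Φ1 * S.iκ' * S.ρF * S.ω' + (1) * Φ1 * S.ρF + (-2) * Φ2 * S.ir * S.ρF + (-4) * Φ3 * S.Z * S.Z * (S.e3 S.iκ') * S.r + (4) * Φ3 * S.Z * S.Z * (algebraMap ℝ (DualNumber A)) (1/2) * S.iκ' * S.κ' * S.r + (8) * Φ3 * S.Z * S.Z * S.iκ' * S.r * S.ω' + (-1) * Φ3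 * (S.e3 S.iκ') * (algebraMap ℝ (DualNumber A)) (1/2) * S.κ * S.κ' * S.r + (2) * Φ3 * (S.e3 S.iκ') * (algebraMap ℝ (DualNumber A)) (1/2) * S.r * S.ρ + (1) * Φ3 * (S.e3 S.iκ') * S.κ * S.κ' * S.r + (3) * Φ3 * (S.e3 S.iκ') * S.r * S.ρ + (-1) * Φ3 * (S.e3 S.κ) * S.r + (-1) * Φ3 * (S.e3 S.κ') * (algebraMap ℝ (DualNumber A)) (1/2) * S.iκ' * S.κ * S.r + (1) * Φ3 * (S.e3 S.κ') * S.iκ' * S.κ * S.r + (-1) * Φ3 * (S.e3 S.r) * S.κ + (-3) * Φ3 * (algebraMap ℝ (DualNumber A)) (1/2) * S.iκ' * S.κ' * S.r * S.ρ + (-4) * Φ3 * (algebraMap ℝ (DualNumber A)) (1/2) * S.iκ' * S.r * S.ρ * S.ω' + (2) * Φ3 * (algebraMap ℝ (DualNumber A)) (1/2) * S.r * S.ρF * S.ρF + (3) * Φ3 * (algebraMap ℝ (DualNumber A)) (1/2) * S.r * S.ρ + (-2) * Φ3 * (algebraMap ℝ (DualNumber A)) (1/2) * (algebraMap ℝ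 (DualNumber A)) (1/2) * S.iκ' * S.κ' * S.r * S.ρ + (2) * Φ3 * (algebraMap ℝ (DualNumber A)) (1/2) * (algebraMap ℝ (DualNumber A)) (1/2) * S.r * S.ρ + (-6) * Φ3 * S.iκ' * S.r * S.ρ * S.ω' + (2) * Φ3 * S.κ * S.r * S.ω' + (3) * Φ3 * S.r * S.ρF * S.ρF + (1) * Φ4 * (S.e3 S.ir) * S.κ * S.r + (1) * Φ4 * (S.e3 S.κ) + (1) * Φ4 * (S.e3 S.r) * S.ir * S.κ + (-2) * Φ4 * S.κ * S.ω' + (-1) * S.Z * (S.e3 Φ3) * (S.eθ S.iκ') * S.r + (1) * S.Z * (S.e3 S.iκ') * (S.eθ Φ3) * S.r + (-1) * S.Z * (S.eθ Φ3) * (algebraMap ℝ (DualNumber A)) (1/2) * S.iκ' * S.κ' * S.r + (-2) * S.Z * (S.eθ Φ3) * S.iκ' * S.r * S.ω' + (1) * (S.e3 Φ0) * S.iκ' * S.r * S.ρF + (2) * (S.e3 Φ1) * S.iκ' * S.ρF + (-1) * (S.e3 Φ3) * (S.e3 S.iκ') * (S.e4 S.κ') * S.iκ' * S.r + (1) * (S.e3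 Φ3) * (S.e3 S.iκ') * (S.e4 S.r) + (4) * (S.e3 Φ3) * (S.e3 S.iκ') * S.iκ' * S.r * S.ρ + (-1) * (S.e3 Φ3) * (S.e3 S.iκ') * S.κ * S.r + (-1) * (S.e3 Φ3) * (S.e3 S.κ') * (S.e4 S.iκ') * S.iκ' * S.r + (1) * (S.e3 Φ3) * (S.e3 S.r) * (S.e4 S.iκ') + (-1) * (S.e3 Φ3) * (S.e3 S.r) * (algebraMap ℝ (DualNumber A)) (1/2) * S.iκ' * S.κ + (2) * (S.e3 Φ3) * (S.e3 S.r) * S.iκ' * S.ω + (1) * (S.e3 Φ3) * (S.e4 (S.e3 S.iκ')) * S.r + (1) * (S.e3 Φ3) * (S.e4 S.iκ') * (algebraMap ℝ (DualNumber A)) (1/2) * S.κ' * S.r + (1) * (S.e3 Φ3) * (S.e4 S.κ') * (algebraMap ℝ (DualNumber A)) (1/2) * S.iκ' * S.r + (2) * (S.e3 Φ3) * (S.e4 S.κ') * (algebraMap ℝ (DualNumber A)) (1/2) * S.iκ' * S.iκ' * S.κ' * S.r + (4) * (S.e3 Φ3) * (S.e4 S.κ') * S.iκ' * S.iκ' *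 S.r * S.ω' + (-3) * (S.e3 Φ3) * (S.e4 S.r) * (algebraMap ℝ (DualNumber A)) (1/2) + (-1) * (S.e3 Φ3) * (S.e4 S.r) * (algebraMap ℝ (DualNumber A)) (1/2) * S.iκ' * S.κ' + (-2) * (S.e3 Φ3) * (S.e4 S.r) * S.iκ' * S.ω' + (-2) * (S.e3 Φ3) * (S.e4 S.ω') * S.iκ' * S.r + (-1) * (S.e3 Φ3) * (S.eθ (S.eθ S.iκ')) * S.r + (2) * (S.e3 Φ3) * (S.eθ S.iκ') * (S.eθ S.κ') * S.iκ' * S.r + (-2) * (S.e3 Φ3) * (S.eθ S.iκ') * (S.eθ S.r) + (1) * (S.e3 Φ3) * (algebraMap ℝ (DualNumber A)) (1/2) * S.iκ' * S.κ * S.κ' * S.r + (-2) * (S.e3 Φ3) * (algebraMap ℝ (DualNumber A)) (1/2) * S.iκ' * S.κ * S.r * S.ω' + (-2) * (S.e3 Φ3) * (algebraMap ℝ (DualNumber A)) (1/2) * S.iκ' * S.r * S.ρ + (-4) * (S.e3 Φ3) * (algebraMap ℝ (DualNumber A)) (1/2) * S.iκ' * S.iκ' * S.κ' * S.r * S.ρ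 + (2) * (S.e3 Φ3) * (algebraMap ℝ (DualNumber A)) (1/2) * S.κ * S.r + (2) * (S.e3 Φ3) * (algebraMap ℝ (DualNumber A)) (1/2) * S.r * S.ω + (-2) * (S.e3 Φ3) * (algebraMap ℝ (DualNumber A)) (1/2) * (algebraMap ℝ (DualNumber A)) (1/2) * S.κ * S.r + (2) * (S.e3 Φ3) * S.iκ' * S.κ * S.r * S.ω' + (2) * (S.e3 Φ3) * S.iκ' * S.r * S.ρF * S.ρF + (2) * (S.e3 Φ3) * S.iκ' * S.r * S.ρ + (-4) * (S.e3 Φ3) * S.iκ' * S.r * S.ω * S.ω' + (-8) * (S.e3 Φ3) * S.iκ' * S.iκ' * S.r * S.ρ * S.ω' + (1) * (S.e3 Φ4) * S.κ + (1) * (S.e3 (S.e3 Φ3)) * (S.e4 S.iκ') * S.r + (-1) * (S.e3 (S.e3 Φ3)) * (algebraMap ℝ (DualNumber A)) (1/2) * S.iκ' * S.κ * S.r + (2) * (S.e3 (S.e3 Φ3)) * S.iκ' * S.r * S.ω + (1) * (S.e3 (S.e4 Φ3)) * (algebraMap ℝ (DualNumber A)) (1/2) * S.r + (-1) * (S.e3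 S.iκ') * (S.e4 Φ3) * (algebraMap ℝ (DualNumber A)) (1/2) * S.κ' * S.r + (1) * (S.e3 S.iκ') * (S.eθ (S.eθ Φ3)) * S.r + (-1) * (S.e3 S.κ') * (S.e4 Φ3) * (algebraMap ℝ (DualNumber A)) (1/2) * S.iκ' * S.r + (1) * (S.e3 S.r) * (S.e4 Φ3) * (algebraMap ℝ (DualNumber A)) (1/2) + (-2) * (S.e4 Φ3) * (algebraMap ℝ (DualNumber A)) (1/2) * S.r * S.ω' + (-1) * (S.e4 (S.e3 Φ3)) * (algebraMap ℝ (DualNumber A)) (1/2) * S.r + (-2) * (S.eθ (S.e3 Φ3)) * (S.eθ S.iκ') * S.r + (-1) * (S.eθ (S.eθ Φ3)) * (algebraMap ℝ (DualNumber A)) (1/2) * S.iκ' * S.κ' * S.r + (-2) * (S.eθ (S.eθ Φ3)) * S.iκ' * S.r * S.ω') * S.hκ' +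
    ((-1) * (algebraMap ℝ (DualNumber A)) (1/2) * S.κ') * hE44 +
    ((1) * S.Z) * hET4 +
    ((1) * S.iκ' * S.r + (1) * S.iκ' * S.iκ' * S.κ' * S.r) * Cm34u3 +
    ((1) * Φ0 * (algebraMap ℝ (DualNumber A)) (1/2) * S.iκ' * S.κ' * S.r * S.ρF + (-2) * Φ1 * (S.e3 S.iκ') * S.ρF + (2) * Φ1 * (S.e3 S.ir) * S.iκ' * S.r * S.ρF + (2) * Φ1 * (S.e3 S.r) * S.iκ' * S.ir * S.ρF + (-2) * Φ1 * (S.e3 S.ρF) * S.iκ' + (2) * Φ1 * (algebraMap ℝ (DualNumber A)) (1/2) * S.iκ' * S.κ' * S.ρF + (-2) * Φ1 * (algebraMap ℝ (DualNumber A)) (1/2) * S.ρF + (-1) * Φ1 * S.iκ' * S.κ' * S.ρF + (4) * Φ1 * S.iκ' * S.ρF * S.ω' + (2) * Φ3 * (S.e3 S.ir) * (algebraMap ℝ (DualNumber A)) (1/2) * S.iκ' * S.r * S.r * S.ρ + (-1) * Φ3 * (S.e3 S.ir) * (algebraMap ℝ (DualNumber A)) (1/2) * S.κ * S.r * S.r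 + (2) * Φ3 * (S.e3 S.r) * (algebraMap ℝ (DualNumber A)) (1/2) * S.iκ' * S.ir * S.r * S.ρ + (-1) * Φ3 * (S.e3 S.r) * (algebraMap ℝ (DualNumber A)) (1/2) * S.ir * S.κ * S.r + (1) * Φ4 * (S.e3 S.iκ') * S.κ * S.κ' + (-2) * Φ4 * (S.e3 S.iκ') * S.ρ + (1) * Φ4 * (S.e3 S.κ) * S.iκ' * S.κ' + (1) * Φ4 * (S.e3 S.κ') * S.iκ' * S.κ + (-2) * Φ4 * (S.e3 S.ρ) * S.iκ' + (1) * Φ4 * (algebraMap ℝ (DualNumber A)) (1/2) * S.κ * S.κ' + (-2) * Φ4 * (algebraMap ℝ (DualNumber A)) (1/2) * S.ρ + (-2) * Φ4 * S.iκ' * S.κ * S.κ' * S.ω' + (4) * Φ4 * S.iκ' * S.ρ * S.ω' + (1) * (S.e3 Φ0) * S.iκ' * S.iκ' * S.κ' * S.r * S.ρF + (-2) * (S.e3 Φ1) * S.iκ' * S.ρF + (2) * (S.e3 Φ1) * S.iκ' * S.iκ' * S.κ' * S.ρF + (-1) * (S.e3 Φ3) * (S.e3 S.ir) * S.iκ'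 * S.κ * S.r * S.r + (2) * (S.e3 Φ3) * (S.e3 S.ir) * S.iκ' * S.iκ' * S.r * S.r * S.ρ + (-1) * (S.e3 Φ3) * (S.e3 S.r) * S.iκ' * S.ir * S.κ * S.r + (2) * (S.e3 Φ3) * (S.e3 S.r) * S.iκ' * S.iκ' * S.ir * S.r * S.ρ + (1) * (S.e3 Φ4) * S.iκ' * S.κ * S.κ' + (-2) * (S.e3 Φ4) * S.iκ' * S.ρ) * S.hr +
    ((1) * S.iκ' * S.r) * E1 +
    ((1) * S.iκ' * S.r) * Cmt3ut +
    ((1) * S.iκ' * S.r) * CX2 +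
    ((1) * (algebraMap ℝ (DualNumber A)) (1/2) * S.r) * Cm34u +
    ((1) * S.Z * S.iκ' * S.r) * Cmt3u +
    ((1) * (S.e3 S.iκ') * S.r + (1) * (S.e3 S.r) * S.iκ' + (1) * (algebraMap ℝ (DualNumber A)) (1/2) * S.r + (-2) * S.iκ' * S.r * S.ω') * E0 +
    ((-4) * S.Z * S.Z + (1) * (S.e3 S.iκ') * S.κ * S.κ' + (-2) * (S.e3 S.iκ') * S.ρ + (-2) * (S.e3 S.ir) * S.iκ' * S.r * S.ρ + (1) * (S.e3 S.ir) * S.κ * S.r + (1) * (S.e3 S.κ) + (1) * (S.e3 S.κ') * S.iκ' * S.κ + (-2) * (S.e3 S.r) * S.iκ' * S.ir * S.ρ + (1) * (S.e3 S.r) * S.ir * S.κ + (-2) * (S.e3 S.ρ) * S.iκ' + (1) * (algebraMap ℝ (DualNumber A)) (1/2) * S.κ * S.κ' + (-2) * (algebraMap ℝ (DualNumber A)) (1/2) * S.ρ + (4) * S.iκ' * S.ρ * S.ω' + (1) * S.κ * S.κ' + (-2) * S.κ * S.ω' + (3) * S.ρ) * hP4e +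
    ((1) * S.iκ' * S.ir * S.κ' * S.r * S.ρF) * hP1e +
    ((2) * S.iκ' * S.ir * S.κ' * S.ρF) * hP2e +
    ((-1) * Φ3 * (algebraMap ℝ (DualNumber A)) (1/2) + (-1) * (S.e3 Φ3) * S.iκ') * j43r +
    ((1) * Φ3 * (algebraMap ℝ (DualNumber A)) (1/2) + (1) * (S.e3 Φ3) * S.iκ') * jttr +
    ((-1) * (S.e3 Φ3) * S.iκ' * S.r) * i43kb +
    ((1) * (S.e3 Φ3) * S.iκ' * S.r) * ittkb +
    ((-1) * (S.e3 Φ3) * S.iκ' * S.iκ' * S.r) * jttkb +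
    ((-1) * Φ0 * S.iκ' * S.r * S.ρF + (-2) * Φ1 * S.iκ' * S.ρF + (4) * Φ3 * S.Z * S.Z * S.iκ' * S.r + (1) * Φ3 * (algebraMap ℝ (DualNumber A)) (1/2) * S.iκ' * S.κ * S.κ' * S.r + (-2) * Φ3 * (algebraMap ℝ (DualNumber A)) (1/2) * S.iκ' * S.r * S.ρ + (-1) * Φ3 * S.iκ' * S.κ * S.κ' * S.r + (-3) * Φ3 * S.iκ' * S.r * S.ρ + (-1) * S.Z * (S.eθ Φ3) * S.iκ' * S.r + (1) * (S.e3 Φ3) * (S.e4 S.κ') * S.iκ' * S.iκ' * S.r + (-1) * (S.e3 Φ3) * (S.e4 S.r) * S.iκ' + (2) * (S.e3 Φ3) * S.iκ' * S.κ * S.r + (-4) * (S.e3 Φ3) * S.iκ' * S.iκ' * S.r * S.ρ + (1) * (S.e4 Φ3) * (algebraMap ℝ (DualNumber A)) (1/2) * S.iκ' * S.κ' * S.r + (-1) * (S.eθ (S.eθ Φ3)) * S.iκ' * S.r) * i3kb +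
    ((1) * (S.e3 Φ3) * (S.e3 S.κ') * S.iκ' * S.iκ' * S.r + (-1) * (S.e3 Φ3) * (S.e3 S.r) * S.iκ' + (-1) * (S.e3 Φ3) * (algebraMap ℝ (DualNumber A)) (1/2) * S.iκ' * S.κ' * S.r + (-1) * (S.e3 (S.e3 Φ3)) * S.iκ' * S.r) * i4kb +
    ((1) * S.Z * (S.e3 Φ3) * S.iκ' * S.r + (-2) * (S.e3 Φ3) * (S.eθ S.κ') * S.iκ' * S.iκ' * S.r + (2) * (S.e3 Φ3) * (S.eθ S.r) * S.iκ' + (2) * (S.eθ (S.e3 Φ3)) * S.iκ' * S.r) * itkb +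
    ((-2) * Φ1 * S.iκ' * S.ir * S.r * S.ρF + (-2) * Φ3 * (algebraMap ℝ (DualNumber A)) (1/2) * S.iκ' * S.ir * S.r * S.r * S.ρ + (1) * Φ3 * (algebraMap ℝ (DualNumber A)) (1/2) * S.ir * S.κ * S.r * S.r + (1) * (S.e3 Φ3) * S.iκ' * S.ir * S.κ * S.r * S.r + (-2) * (S.e3 Φ3) * S.iκ' * S.iκ' * S.ir * S.r * S.r * S.ρ) * i3r +
    ((1) * Φ0 * S.iκ' * S.iκ' * S.r * S.ρF + (2) * Φ1 * S.iκ' * S.iκ' * S.ρF + (-4) * Φ3 * S.Z * S.Z * S.iκ' * S.iκ' * S.r + (2) * Φ3 * (algebraMap ℝ (DualNumber A)) (1/2) * S.iκ' * S.iκ' * S.r * S.ρ + (3) * Φ3 * S.iκ' * S.iκ' * S.r * S.ρ + (1) * S.Z * (S.eθ Φ3) * S.iκ' * S.iκ' * S.r + (-2) * (S.e3 Φ3) * (S.e4 S.κ') * S.iκ' * S.iκ' * S.iκ' * S.r + (1) * (S.e3 Φ3) * (S.e4 S.r) * S.iκ' * S.iκ' + (-1) * (S.e3 Φ3) * (algebraMap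 ℝ (DualNumber A)) (1/2) * S.iκ' * S.iκ' * S.κ * S.r + (-1) * (S.e3 Φ3) * S.iκ' * S.iκ' * S.κ * S.r + (4) * (S.e3 Φ3) * S.iκ' * S.iκ' * S.r * S.ω + (4) * (S.e3 Φ3) * S.iκ' * S.iκ' * S.iκ' * S.r * S.ρ + (1) * (S.eθ (S.eθ Φ3)) * S.iκ' * S.iκ' * S.r) * d3kb +
    ((-1) * Φ3 * (algebraMap ℝ (DualNumber A)) (1/2) * (algebraMap ℝ (DualNumber A)) (1/2) * S.r + (1) * (S.e3 Φ3) * (S.e3 S.r) * S.iκ' * S.iκ' + (2) * (S.e3 Φ3) * (algebraMap ℝ (DualNumber A)) (1/2) * S.iκ' * S.iκ' * S.κ' * S.r + (2) * (S.e3 Φ3) * S.iκ' * S.iκ' * S.r * S.ω' + (1) * (S.e3 (S.e3 Φ3)) * S.iκ' * S.iκ' * S.r) * d4kb +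
    ((1) * Φ3 * (algebraMap ℝ (DualNumber A)) (1/2) * S.r + (-1) * Φ3 * S.r + (1) * (S.e3 Φ3) * (algebraMap ℝ (DualNumber A)) (1/2) * S.iκ' * S.r + (-1) * (S.e3 Φ3) * (algebraMap ℝ (DualNumber A)) (1/2) * S.iκ' * S.iκ' * S.κ' * S.r + (1) * (S.e3 Φ3) * S.iκ' * S.r) * d3k +
    ((-2) * Φ3 * (algebraMap ℝ (DualNumber A)) (1/2) * S.iκ' * S.r + (-3) * Φ3 * S.iκ' * S.r) * d3rho +
    ((-1) * Φ0 * S.iκ' * S.r + (-2) * Φ1 * S.iκ') * d3rF +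
    ((-1) * Φ0 * S.iκ' * S.ρF + (4) * Φ3 * S.Z * S.Z * S.iκ' + (-2) * Φ3 * (algebraMap ℝ (DualNumber A)) (1/2) * S.iκ' * S.ρ + (1) * Φ3 * (algebraMap ℝ (DualNumber A)) (1/2) * S.κ + (2) * Φ3 * (algebraMap ℝ (DualNumber A)) (1/2) * S.ω + (-1) * Φ3 * (algebraMap ℝ (DualNumber A)) (1/2) * (algebraMap ℝ (DualNumber A)) (1/2) * S.κ + (-3) * Φ3 * S.iκ' * S.ρ + (-1) * Φ3 * S.κ + (-1) * S.Z * (S.eθ Φ3) * S.iκ' + (-1) * (S.e3 Φ3) * (algebraMap ℝ (DualNumber A)) (1/2) * S.iκ' * S.κ + (1) * (S.e3 Φ3) * S.iκ' * S.κ + (2) * (S.e3 Φ3) * S.iκ' * S.ω + (-1) * (S.eθ (S.eθ Φ3)) * S.iκ') * d3r +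
    ((-2) * Φ3 * (algebraMap ℝ (DualNumber A)) (1/2) * (algebraMap ℝ (DualNumber A)) (1/2) * S.κ' + (-4) * (S.e3 Φ3) * (algebraMap ℝ (DualNumber A)) (1/2) + (-2) * (S.e3 Φ3) * S.iκ' * S.ω' + (-1) * (S.e3 (S.e3 Φ3)) * S.iκ') * d4r +
    ((8) * Φ3 * S.Z * S.iκ' * S.r + (-1) * (S.eθ Φ3) * S.iκ' * S.r) * d3Z +
    ((1) * Φ3 * S.Z * (algebraMap ℝ (DualNumber A)) (1/2) + (1) * S.Z * (S.e3 Φ3) * S.iκ' + (-2) * (S.e3 Φ3) * (S.eθ S.κ') * S.iκ' * S.iκ' + (2) * (S.eθ Φ3) * (algebraMap ℝ (DualNumber A)) (1/2) + (2) * (S.eθ (S.e3 Φ3)) * S.iκ') * dtr +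
    ((-1) * S.Z * (S.e3 Φ3) * S.iκ' * S.iκ' * S.r + (2) * (S.e3 Φ3) * (S.eθ S.κ') * S.iκ' * S.iκ' * S.iκ' * S.r + (1) * (S.eθ Φ3) * (algebraMap ℝ (DualNumber A)) (1/2) * S.iκ' * S.r + (-2) * (S.eθ (S.e3 Φ3)) * S.iκ' * S.iκ' * S.r) * dtkb +
    ((-2) * (S.e3 Φ3) * S.iκ' * S.r + (2) * (S.e3 Φ3) * S.iκ' * S.iκ' * S.κ' * S.r) * dww +
    ((1) * (S.e3 Φ3) * S.iκ' * S.iκ' * S.r) * j34kb +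
    ((-1) * S.iκ' * S.iκ' * S.r) * C34K +
    ((-1) * Φ0 * S.r * S.ρF + (-1) * Φ1 * S.ρF + (-1) * Φ3 * (algebraMap ℝ (DualNumber A)) (1/2) * S.r * S.ρ + (-1) * Φ3 * (algebraMap ℝ (DualNumber A)) (1/2) * (algebraMap ℝ (DualNumber A)) (1/2) * S.κ * S.κ' * S.r + (1) * Φ3 * S.r * S.ρF * S.ρF + (2) * Φ3 * S.r * S.ρ + (-3) * (S.e3 Φ3) * (algebraMap ℝ (DualNumber A)) (1/2) * S.κ * S.r + (-2) * (S.e3 Φ3) * S.iκ' * S.κ * S.r * S.ω' + (-2) * (S.e3 Φ3) * S.iκ' * S.r * S.ρ + (-1) * (S.e3 (S.e3 Φ3)) * S.iκ' * S.κ * S.r) * hhalf +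
    ((1) * S.Z * c14 * S.iκ' + (-1) * S.Z * c15 * S.iκ' * S.iκ' * S.r + (-2) * c1 * (S.e4 S.κ') * S.iκ' * S.iκ' * S.iκ' * S.r + (1) * c1 * (S.e4 S.r) * S.iκ' * S.iκ' + (-1) * c1 * (algebraMap ℝ (DualNumber A)) (1/2) * S.iκ' * S.iκ' * S.κ * S.r + (-1) * c1 * S.iκ' * S.iκ' * S.κ * S.r + (4) * c1 * S.iκ' * S.iκ' * S.r * S.ω + (4) * c1 * S.iκ' * S.iκ' * S.iκ' * S.r * S.ρ + (-1) * c10 * (algebraMap ℝ (DualNumber A)) (1/2) * S.iκ' * S.κ + (1) * c10 * S.iκ' * S.κ + (2) * c10 * S.iκ' * S.ω + (-4) * c11 * (algebraMap ℝ (DualNumber A)) (1/2) + (-2) * c11 * S.iκ' * S.ω' + (-2) * c14 * (S.eθ S.κ') * S.iκ' * S.iκ' + (2) * c15 * (S.eθ S.κ') * S.iκ' * S.iκ' * S.iκ' * S.r + (1) * c2 * (S.e3 S.r) * S.iκ' * S.iκ' + (2) * c2 * (algebraMap ℝ (DualNumber A)) (1/2) * S.iκ' * S.iκ' * S.κ'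 * S.r + (2) * c2 * S.iκ' * S.iκ' * S.r * S.ω' + (1) * c3 * (algebraMap ℝ (DualNumber A)) (1/2) * S.iκ' * S.r + (-1) * c3 * (algebraMap ℝ (DualNumber A)) (1/2) * S.iκ' * S.iκ' * S.κ' * S.r + (1) * c3 * S.iκ' * S.r + (-2) * c5 * S.iκ' * S.r + (2) * c5 * S.iκ' * S.iκ' * S.κ' * S.r + (1) * (S.e3 c2) * S.iκ' * S.iκ' * S.r + (-1) * (S.e4 c10) * S.iκ' + (1) * (S.eθ c14) * S.iκ' + (-1) * (S.eθ c15) * S.iκ' * S.iκ' * S.r) * zz6 +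
    ((-1) * c10 * S.iκ') * zz2 +
    ((8) * S.Z * c12 * S.iκ' * S.r + (1) * S.Z * c14 * (algebraMap ℝ (DualNumber A)) (1/2) + (-4) * S.Z * S.Z * c1 * S.iκ' * S.iκ' * S.r + (4) * S.Z * S.Z * c10 * S.iκ' + (2) * c1 * (algebraMap ℝ (DualNumber A)) (1/2) * S.iκ' * S.iκ' * S.r * S.ρ + (3) * c1 * S.iκ' * S.iκ' * S.r * S.ρ + (-2) * c10 * (algebraMap ℝ (DualNumber A)) (1/2) * S.iκ' * S.ρ + (1) * c10 * (algebraMap ℝ (DualNumber A)) (1/2) * S.κ + (2) * c10 * (algebraMap ℝ (DualNumber A)) (1/2) * S.ω + (-1) * c10 * (algebraMap ℝ (DualNumber A)) (1/2) * (algebraMap ℝ (DualNumber A)) (1/2) * S.κ + (-3) * c10 * S.iκ' * S.ρ + (-1) * c10 * S.κ + (-2) * c11 * (algebraMap ℝ (DualNumber A)) (1/2) * (algebraMap ℝ (DualNumber A)) (1/2) * S.κ' + (-1) * c2 * (algebraMap ℝ (DualNumber A)) (1/2) * (algebraMap ℝ (DualNumber A)) (1/2) * S.r + (1) * c3 * (algebraMap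 ℝ (DualNumber A)) (1/2) * S.r + (-1) * c3 * S.r + (-2) * c6 * (algebraMap ℝ (DualNumber A)) (1/2) * S.iκ' * S.r + (-3) * c6 * S.iκ' * S.r + (-1) * (S.e4 c10) * (algebraMap ℝ (DualNumber A)) (1/2) + (1) * (S.eθ c14) * (algebraMap ℝ (DualNumber A)) (1/2)) * zz5 +
    ((-1) * c10 * (algebraMap ℝ (DualNumber A)) (1/2)) * zz1 +
    ((1) * c14 * S.iκ' + (-1) * c15 * S.iκ' * S.iκ' * S.r) * zz12 +
    ((1) * c14 * (algebraMap ℝ (DualNumber A)) (1/2)) * zz11 +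
    ((1) * c1 * S.iκ' * S.iκ' * S.r + (-1) * c10 * S.iκ') * zz10 +
    ((1) * S.Z * c1 * S.iκ' * S.iκ' * S.r + (-1) * S.Z * c10 * S.iκ' + (-1) * c12 * S.iκ' * S.r + (2) * c14 * (algebraMap ℝ (DualNumber A)) (1/2) + (1) * c15 * (algebraMap ℝ (DualNumber A)) (1/2) * S.iκ' * S.r) * zz8 +
    ((1) * c1 * S.iκ' * S.iκ' * S.r * S.ρF + (-1) * c10 * S.iκ' * S.ρF + (-1) * c8 * S.iκ' * S.r) * zz3 +
    ((2) * c1 * S.iκ' * S.iκ' * S.ρF + (-2) * c8 * S.iκ') * zz4 +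
    ((-1) * c11 * S.iκ' + (1) * c2 * S.iκ' * S.iκ' * S.r) * zz7 +
    ((2) * c14 * S.iκ' + (-2) * c15 * S.iκ' * S.iκ' * S.r) * zz9 +
    ((1) * c2 * S.iκ' * S.iκ' * S.r) * zz0

end RNSetting
end
end
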